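/- Let X and Y be locally compact Hausdorff spaces, let E and F be real Banach spaces with E nontrivial and F strictly convex, and let T : C₀(X,E) → C₀(Y,F) be a linear isometry. Set Y₁ = ⋃_{x ∈ X} Q_x. Then for every f ∈ C₀(X,E), ‖f‖ = sup{‖Tf(y)‖ : y ∈ Y₁}. -/

import Mathlib

open ZeroAtInfty

variable {X Y E F : Type*}
  [TopologicalSpace X] [LocallyCompactSpace X] [T2Space X]
  [TopologicalSpace Y] [LocallyCompactSpace Y] [T2Space Y]
  [NormedAddCommGroup E] [NormedSpace ℝ E] [CompleteSpace E]
  [NormedAddCommGroup F] [NormedSpace ℝ F] [CompleteSpace F]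

/-- `S_{x,ν} = {f ∈ C₀(X,E) : ν(f(x)) = ‖f‖ = 1}`. -/
def Sset (x : X) (ν : E →L[ℝ] ℝ) : Set C₀(X, E) :=
  {f | ν (f x) = 1 ∧ ‖f‖ = 1}

/-- `R_{y,μ} = {g ∈ C₀(Y,F) : μ(g(y)) = ‖g‖ = 1}`. -/
def Rset (y : Y) (μ : F →L[ℝ] ℝ) : Set C₀(Y, F) :=
  {g | μ (g y) = 1 ∧ ‖g‖ = 1}

/-- `Q_{x,ν}`: the set of `y ∈ Y` such that `T(S_{x,ν}) ⊆ R_{y,μ}` for some `μ` in the unit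
sphere of `F*`, when `S_{x,ν} ≠ ∅`; empty otherwise. -/
def Qnu (T : C₀(X, E) →ₗᵢ[ℝ] C₀(Y, F)) (x : X) (ν : E →L[ℝ] ℝ) : Set Y :=
  {y | (Sset x ν).Nonempty ∧
    ∃ μ : F →L[ℝ] ℝ, ‖μ‖ = 1 ∧ ∀ f ∈ Sset x ν, T f ∈ Rset y μ}

/-- `Q_x = ⋃_{ν ∈ S_{E*}} Q_{x,ν}`. -/
def Qset (T : C₀(X, E) →ₗᵢ[ℝ] C₀(Y, F)) (x : X) : Set Y :=
  ⋃ ν ∈ {ν : E →L[ℝ] ℝ | ‖ν‖ = 1}, Qnu T x ν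

/-!
A nonzero `f` attains its norm at some `x`, and a functional `ν` norming `f x` puts `‖f‖⁻¹ • f`
into `S_{x,ν}`. This set is convex, so `T(S_{x,ν})` is a convex set of norm-one functions on `Y`.
Averaging finitely many of them and evaluating where the average peaks shows that the compact
sets `{y | 1 ≤ ‖g y‖}`, `g ∈ T(S_{x,ν})`, have the finite intersection property; hence all these
`g` have norm one at a common point `y`. Strict convexity of `F` then makes all the values `g y`
equal to one unit vector `w`, and a functional norming `w` witnesses `y ∈ Q_{x,ν}`. At this `y`,
`‖T f y‖ = ‖f‖`.
-/

open Metric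

theorem Convex.subsingleton_of_subset_sphere {V : Type*} [NormedAddCommGroup V]
    [NormedSpace ℝ V] [StrictConvexSpace ℝ V] {s : Set V} (hs : Convex ℝ s) {r : ℝ}
    (hsr : s ⊆ sphere 0 r) : s.Subsingleton := by
  intro v hv w hw
  by_contra hne
  have hmid : (1 / 2 : ℝ) • (v + w) ∈ s := by
    rw [smul_add]; exact hs hv hw (by norm_num) (by norm_num) (by norm_num)
  have hv_r : ‖v‖ = r := mem_sphere_zero_iff_norm.mp (hsr hv)
  have hlt := (norm_midpoint_lt_iff (hv_r.trans (mem_sphere_zero_iff_norm.mp (hsr hw)).symm)).mpr hne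
  rw [mem_sphere_zero_iff_norm.mp (hsr hmid), hv_r] at hlt
  exact hlt.false

theorem norm_eq_one_of_one_le_norm_sum_smul {V ι : Type*} [SeminormedAddCommGroup V]
    [NormedSpace ℝ V] {u : Finset ι} {w : ι → ℝ} {v : ι → V} (hw : ∀ i ∈ u, 0 < w i)
    (hw₁ : ∑ i ∈ u, w i = 1) (hv : ∀ i ∈ u, ‖v i‖ ≤ 1) (h : 1 ≤ ‖∑ i ∈ u, w i • v i‖) :
    ∀ i ∈ u, ‖v i‖ = 1 := by
  have hle : ∀ i ∈ u, w i * ‖v i‖ ≤ w i := fun i hi =>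
    mul_le_of_le_one_right (hw i hi).le (hv i hi)
  have hsum : ∑ i ∈ u, w i * ‖v i‖ = ∑ i ∈ u, w i := by
    refine le_antisymm (Finset.sum_le_sum hle) ?_
    calc ∑ i ∈ u, w i = 1 := hw₁
      _ ≤ ‖∑ i ∈ u, w i • v i‖ := h
      _ ≤ ∑ i ∈ u, ‖w i • v i‖ := norm_sum_le _ _
      _ = ∑ i ∈ u, w i * ‖v i‖ := Finset.sum_congr rfl fun i hi => by
          rw [norm_smul, Real.norm_of_nonneg (hw i hi).le]
  intro i hi
  have := (Finset.sum_eq_sum_iff_of_le hle).mp hsum i hi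
  exact (mul_eq_left₀ (hw i hi).ne').mp this

namespace ZeroAtInftyContinuousMap

variable {Z G : Type*} [TopologicalSpace Z] [NormedAddCommGroup G]

theorem norm_apply_le (f : C₀(Z, G)) (z : Z) : ‖f z‖ ≤ ‖f‖ :=
  f.toBCF.norm_coe_le_norm z

theorem norm_le {f : C₀(Z, G)} {C : ℝ} (hC : 0 ≤ C) : ‖f‖ ≤ C ↔ ∀ z, ‖f z‖ ≤ C :=
  BoundedContinuousFunction.norm_le (f := f.toBCF) hC

theorem exists_norm_apply_eq_norm {f : C₀(Z, G)} (hf : f ≠ 0) : ∃ z, ‖f z‖ = ‖f‖ := by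
  obtain ⟨z₀, hz₀⟩ := DFunLike.ne_iff.mp hf
  have hpos : 0 < ‖f z₀‖ := norm_pos_iff.mpr hz₀
  have hsmall : ∀ᶠ z in Filter.cocompact Z, ‖f z‖ ≤ ‖f z₀‖ :=
    (zero_at_infty f).norm.eventually (ge_mem_nhds (by simpa using hpos))
  obtain ⟨z, hz⟩ := (map_continuous f).norm.exists_forall_ge' z₀ hsmall
  exact ⟨z, le_antisymm (f.norm_apply_le z) ((norm_le (norm_nonneg _)).mpr hz)⟩

theorem isCompact_setOf_le_norm_apply (f : C₀(Z, G)) {c : ℝ} (hc : 0 < c) :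
    IsCompact {z | c ≤ ‖f z‖} := by
  obtain ⟨t, ht, hts⟩ := Filter.mem_cocompact.mp
    ((zero_at_infty f).norm.eventually (gt_mem_nhds (by simpa using hc)))
  refine ht.of_isClosed_subset (isClosed_le continuous_const (map_continuous f).norm) ?_
  intro z (hz : c ≤ ‖f z‖)
  by_contra hzt
  exact (hts hzt).not_ge hz

variable [NormedSpace ℝ G]

def evalLinearMap (z : Z) : C₀(Z, G) →ₗ[ℝ] G where
  toFun f := f z
  map_add' _ _ := rfl
  map_smul' _ _ := rfl

@[simp]
theorem evalLinearMap_apply (z : Z) (f : C₀(Z, G)) : evalLinearMap z f = f z := rfl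

theorem exists_forall_norm_apply_eq_one_of_finset {C : Set C₀(Z, G)} (hC : Convex ℝ C)
    (hC₁ : C ⊆ sphere 0 1) {ι : Type*} {u : Finset ι} (hu : u.Nonempty) {g : ι → C₀(Z, G)}
    (hg : ∀ i ∈ u, g i ∈ C) : ∃ z, ∀ i ∈ u, ‖g i z‖ = 1 := by
  set w : ι → ℝ := fun _ => (u.card : ℝ)⁻¹
  have hw : ∀ i ∈ u, 0 < w i := fun _ _ => by positivity
  have hw₁ : ∑ i ∈ u, w i = 1 := by simp [w, hu.card_pos.ne']
  have havg : ∑ i ∈ u, w i • g i ∈ C := hC.sum_mem (fun i hi => (hw i hi).le) hw₁ hg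
  have havg₁ : ‖∑ i ∈ u, w i • g i‖ = 1 := mem_sphere_zero_iff_norm.mp (hC₁ havg)
  obtain ⟨z, hz⟩ := exists_norm_apply_eq_norm (f := ∑ i ∈ u, w i • g i)
    (by rw [← norm_ne_zero_iff, havg₁]; exact one_ne_zero)
  refine ⟨z, norm_eq_one_of_one_le_norm_sum_smul hw hw₁ (fun i hi => ?_) (le_of_eq ?_)⟩
  · exact (norm_apply_le _ z).trans (mem_sphere_zero_iff_norm.mp (hC₁ (hg i hi))).le
  · rw [← havg₁, ← hz, ← evalLinearMap_apply z, map_sum]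
    simp only [map_smul, evalLinearMap_apply]

theorem exists_forall_norm_apply_eq_one {C : Set C₀(Z, G)} (hC : Convex ℝ C)
    (hC₁ : C ⊆ sphere 0 1) (hne : C.Nonempty) : ∃ z, ∀ g ∈ C, ‖g z‖ = 1 := by
  classical
  obtain ⟨g₀, hg₀⟩ := hne
  let K : C → Set Z := fun g => {z | 1 ≤ ‖(g : C₀(Z, G)) z‖}
  have hK_closed : ∀ g, IsClosed (K g) := fun g =>
    isClosed_le continuous_const (map_continuous (g : C₀(Z, G))).norm
  have hK_compact : IsCompact (K ⟨g₀, hg₀⟩) := isCompact_setOf_le_norm_apply g₀ one_pos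
  obtain ⟨z, -, hz⟩ := hK_compact.inter_iInter_nonempty K hK_closed fun u => by
    obtain ⟨z, hz⟩ := exists_forall_norm_apply_eq_one_of_finset hC hC₁
      (u := insert ⟨g₀, hg₀⟩ u) (Finset.insert_nonempty _ _) (g := Subtype.val) fun g _ => g.2
    exact ⟨z, (hz _ (Finset.mem_insert_self _ _)).ge,
      Set.mem_iInter₂.mpr fun g hg => (hz g (Finset.mem_insert_of_mem hg)).ge⟩
  refine ⟨z, fun g hg => le_antisymm ?_ (Set.mem_iInter.mp hz ⟨g, hg⟩)⟩
  exact (norm_apply_le g z).trans (mem_sphere_zero_iff_norm.mp (hC₁ hg)).le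

theorem exists_forall_apply_eq [StrictConvexSpace ℝ G] {C : Set C₀(Z, G)} (hC : Convex ℝ C)
    (hC₁ : C ⊆ sphere 0 1) (hne : C.Nonempty) : ∃ z w, ‖w‖ = 1 ∧ ∀ g ∈ C, g z = w := by
  obtain ⟨g₀, hg₀⟩ := hne
  obtain ⟨z, hz⟩ := exists_forall_norm_apply_eq_one hC hC₁ ⟨g₀, hg₀⟩
  have hsub : (evalLinearMap z '' C).Subsingleton :=
    (hC.linear_image _).subsingleton_of_subset_sphere (r := 1) <| by
      rintro _ ⟨g, hg, rfl⟩
      simpa using hz g hg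
  exact ⟨z, g₀ z, hz g₀ hg₀, fun g hg => hsub ⟨g, hg, rfl⟩ ⟨g₀, hg₀, rfl⟩⟩

end ZeroAtInftyContinuousMap

theorem one_le_norm_of_apply_eq_one {V : Type*} [SeminormedAddCommGroup V] [NormedSpace ℝ V]
    {μ : V →L[ℝ] ℝ} (hμ : ‖μ‖ ≤ 1) {v : V} (h : μ v = 1) : 1 ≤ ‖v‖ := by
  simpa [h] using μ.le_of_opNorm_le hμ v

open ZeroAtInftyContinuousMap

section

omit [LocallyCompactSpace X] [T2Space X] [LocallyCompactSpace Y] [T2Space Y] [CompleteSpace E]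
  [CompleteSpace F]

theorem convex_Sset {x : X} {ν : E →L[ℝ] ℝ} (hν : ‖ν‖ ≤ 1) : Convex ℝ (Sset x ν) := by
  have hS : Sset x ν = closedBall 0 1 ∩ {f | ((ν : E →ₗ[ℝ] ℝ) ∘ₗ evalLinearMap x) f = 1} := by
    ext f
    simp only [Sset, Set.mem_inter_iff, mem_closedBall_zero_iff, Set.mem_ofPred_eq,
      LinearMap.comp_apply, evalLinearMap_apply, ContinuousLinearMap.coe_coe]
    refine ⟨fun ⟨hνf, hf⟩ => ⟨hf.le, hνf⟩, fun ⟨hf, hνf⟩ => ⟨hνf, le_antisymm hf ?_⟩⟩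
    exact (one_le_norm_of_apply_eq_one hν hνf).trans (norm_apply_le f x)
  rw [hS]
  exact (convex_closedBall 0 1).inter (convex_hyperplane (LinearMap.isLinear _) 1)

theorem image_Sset_subset_sphere (T : C₀(X, E) →ₗᵢ[ℝ] C₀(Y, F)) (x : X) (ν : E →L[ℝ] ℝ) :
    T '' Sset x ν ⊆ sphere 0 1 := by
  rintro _ ⟨f, hf, rfl⟩
  simpa using hf.2

theorem Qnu_nonempty [StrictConvexSpace ℝ F] (T : C₀(X, E) →ₗᵢ[ℝ] C₀(Y, F)) {x : X}
    {ν : E →L[ℝ] ℝ} (hν : ‖ν‖ ≤ 1) (hS : (Sset x ν).Nonempty) : (Qnu T x ν).Nonempty := by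
  obtain ⟨y, w, hw, hyw⟩ := exists_forall_apply_eq
    ((convex_Sset hν).linear_image T.toLinearMap) (image_Sset_subset_sphere T x ν) (hS.image T)
  obtain ⟨μ, hμ, hμw⟩ := exists_dual_vector ℝ w (by simp [hw])
  refine ⟨y, hS, μ, hμ, fun f hf => ⟨?_, (T.norm_map f).trans hf.2⟩⟩
  rw [hyw (T f) ⟨f, hf, rfl⟩, hμw, hw]
  simp

theorem norm_apply_eq_one_of_mem_Qnu {T : C₀(X, E) →ₗᵢ[ℝ] C₀(Y, F)} {x : X} {ν : E →L[ℝ] ℝ}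
    {y : Y} {f : C₀(X, E)} (hy : y ∈ Qnu T x ν) (hf : f ∈ Sset x ν) : ‖T f y‖ = 1 := by
  obtain ⟨-, μ, hμ, hR⟩ := hy
  obtain ⟨hμf, hTf⟩ := hR f hf
  exact le_antisymm ((norm_apply_le _ y).trans hTf.le) (one_le_norm_of_apply_eq_one hμ.le hμf)

theorem exists_inv_norm_smul_mem_Sset {f : C₀(X, E)} (hf : f ≠ 0) :
    ∃ x ν, ‖ν‖ = 1 ∧ ‖f‖⁻¹ • f ∈ Sset x ν := by
  obtain ⟨x, hx⟩ := exists_norm_apply_eq_norm hf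
  obtain ⟨ν, hν, hνx⟩ := exists_dual_vector ℝ (f x) (by rw [hx]; exact norm_ne_zero_iff.mpr hf)
  refine ⟨x, ν, hν, ?_, norm_smul_inv_norm hf⟩
  simp [hνx, hx, norm_ne_zero_iff.mpr hf]

end

theorem norm_eq_sSup_on_Y1_general [StrictConvexSpace ℝ F]
    (T : C₀(X, E) →ₗᵢ[ℝ] C₀(Y, F)) (f : C₀(X, E)) :
    ‖f‖ = sSup {r : ℝ | ∃ y ∈ ⋃ x : X, Qset T x, r = ‖T f y‖} := by
  have hbdd : ∀ r ∈ {r : ℝ | ∃ y ∈ ⋃ x : X, Qset T x, r = ‖T f y‖}, r ≤ ‖f‖ := by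
    rintro _ ⟨y, -, rfl⟩
    exact (norm_apply_le _ y).trans (T.norm_map f).le
  refine le_antisymm ?_ (Real.sSup_le hbdd (norm_nonneg f))
  rcases eq_or_ne f 0 with rfl | hf
  · exact norm_zero.trans_le (Real.sSup_nonneg (by rintro _ ⟨y, -, rfl⟩; exact norm_nonneg _))
  obtain ⟨x, ν, hν, hfS⟩ := exists_inv_norm_smul_mem_Sset hf
  obtain ⟨y, hy⟩ := Qnu_nonempty T hν.le ⟨_, hfS⟩
  have hyY₁ : y ∈ ⋃ x : X, Qset T x := Set.mem_iUnion.mpr ⟨x, Set.mem_biUnion hν hy⟩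
  have hTfy : ‖T f y‖ = ‖f‖ := by
    have h₁ := norm_apply_eq_one_of_mem_Qnu hy hfS
    rw [map_smul, coe_smul, Pi.smul_apply, norm_smul, norm_inv, norm_norm,
      inv_mul_eq_one₀ (norm_ne_zero_iff.mpr hf)] at h₁
    exact h₁.symm
  exact le_csSup ⟨‖f‖, hbdd⟩ ⟨y, hyY₁, hTfy.symm⟩

/-- With `Y₁ = ⋃_{x ∈ X} Q_x`, one has `‖f‖ = sup{‖Tf(y)‖ : y ∈ Y₁}`. -/
theorem norm_eq_sSup_on_Y1 [Nontrivial E] [StrictConvexSpace ℝ F]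
    (T : C₀(X, E) →ₗᵢ[ℝ] C₀(Y, F)) (f : C₀(X, E)) :
    ‖f‖ = sSup {r : ℝ | ∃ y ∈ ⋃ x : X, Qset T x, r = ‖T f y‖} :=
  norm_eq_sSup_on_Y1_general T f
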